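/- Let M = (W, ≤, N, V) be a coherent and Cartesian intuitionistic neighbourhood model. Then: (1) if w R~ v and v ≤ u, there exists s ∈ W with w ≤ s and s R~ u; (2) if w R~ v, v ≤~ u, w R~ v' and v' ≤~ u, then v = v'. -/
import Mathlib


/-
Common formalisation of the syntax and semantics of the intuitionistic
monotone modal logic IM, its generalised Hilbert calculi, intuitionistic
neighbourhood models, IFOM-structures, and related constructions.
-/

namespace IMPaper

/-- Formulas of the monotone modal language L. -/
inductive Formula : Type
  | prop : ℕ → Formula
  | bot  : Formula
  | and  : Formula → Formula → Formula
  | or   : Formula → Formula → Formula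
  | imp  : Formula → Formula → Formula
  | box  : Formula → Formula
  | dia  : Formula → Formula
deriving DecidableEq

/-- Negation: ¬φ abbreviates φ → ⊥. -/
def Formula.neg (φ : Formula) : Formula := φ.imp .bot

/-- Top: ⊤ abbreviates ⊥ → ⊥. -/
def Formula.top : Formula := Formula.bot.imp .bot

/-- Substitution of formulas for proposition letters. -/
def Formula.subst (σ : ℕ → Formula) : Formula → Formula
  | .prop i   => σ i
  | .bot      => .bot
  | .and φ ψ  => .and (φ.subst σ) (ψ.subst σ)
  | .or φ ψ   => .or (φ.subst σ) (ψ.subst σ)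
  | .imp φ ψ  => .imp (φ.subst σ) (ψ.subst σ)
  | .box φ    => .box (φ.subst σ)
  | .dia φ    => .dia (φ.subst σ)

private def pp0 : Formula := .prop 0
private def pp1 : Formula := .prop 1
private def pp2 : Formula := .prop 2

/-- A standard axiomatisation of intuitionistic propositional logic. -/
def IpcAx : Set Formula :=
  { Formula.imp pp0 (.imp pp1 pp0),
    Formula.imp (.imp pp0 (.imp pp1 pp2)) (.imp (.imp pp0 pp1) (.imp pp0 pp2)),
    Formula.imp (.and pp0 pp1) pp0,
    Formula.imp (.and pp0 pp1) pp1,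
    Formula.imp pp0 (.imp pp1 (.and pp0 pp1)),
    Formula.imp pp0 (.or pp0 pp1),
    Formula.imp pp1 (.or pp0 pp1),
    Formula.imp (.imp pp0 pp2) (.imp (.imp pp1 pp2) (.imp (.or pp0 pp1) pp2)),
    Formula.imp .bot pp0 }

/-- All substitution instances of a set of formulas. -/
def Instances (Ax : Set Formula) : Set Formula :=
  {φ | ∃ ψ ∈ Ax, ∃ σ, φ = ψ.subst σ}

/-- 𝒜x: all substitution instances of Ax together with all substitution
instances of the axioms of intuitionistic propositional logic. -/
def ScrAx (Ax : Set Formula) : Set Formula := Instances Ax ∪ Instances IpcAx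

/-- The generalised Hilbert calculus GHC(Ax). -/
inductive GHC (Ax : Set Formula) : Set Formula → Formula → Prop
  | el {Γ : Set Formula} {φ : Formula} : φ ∈ Γ → GHC Ax Γ φ
  | ax {Γ : Set Formula} {φ : Formula} : φ ∈ ScrAx Ax → GHC Ax Γ φ
  | mp {Γ : Set Formula} {φ ψ : Formula} :
      GHC Ax Γ φ → GHC Ax Γ (φ.imp ψ) → GHC Ax Γ ψ
  | monBox {Γ : Set Formula} {φ ψ : Formula} :
      GHC Ax ∅ (φ.imp ψ) → GHC Ax Γ ((Formula.box φ).imp (Formula.box ψ))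
  | monDia {Γ : Set Formula} {φ ψ : Formula} :
      GHC Ax ∅ (φ.imp ψ) → GHC Ax Γ ((Formula.dia φ).imp (Formula.dia ψ))

/-- The axioms (neg_a) and (I_◇) of the calculus IMCalc. -/
def IMAx : Set Formula :=
  { Formula.imp ((Formula.box pp0).and (Formula.dia pp0.neg)) .bot,
    Formula.imp ((Formula.box Formula.top).imp (Formula.dia pp0)) (Formula.dia pp0) }

/-- Derivability in the calculus IMCalc = GHC({(□p ∧ ◇¬p) → ⊥, (□⊤ → ◇p) → ◇p}). -/
def IMC : Set Formula → Formula → Prop := GHC IMAx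

/-- An intuitionistic neighbourhood: a partial function W ⇀ 𝒫(W), encoded as a
domain together with a (total) value function whose values matter on the domain. -/
structure Nbhd (W : Type) where
  dom : Set W
  val : W → Set W

/-- The data of an intuitionistic neighbourhood model. -/
structure INStruct (W : Type) where
  le : W → W → Prop
  N : Set (Nbhd W)
  V : ℕ → Set W

variable {W W' : Type}

/-- A set is upward closed w.r.t. the order of the structure. -/
def INStruct.Up (M : INStruct W) (s : Set W) : Prop :=
  ∀ ⦃w v : W⦄, M.le w v → w ∈ s → v ∈ s

/-- `M` is an intuitionistic neighbourhood model: the order is a partial order,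
the domain of every neighbourhood is upward closed, and the valuation assigns
upward closed sets to proposition letters. -/
def INStruct.IsModel (M : INStruct W) : Prop :=
  IsPartialOrder W M.le ∧ (∀ a ∈ M.N, M.Up a.dom) ∧ ∀ i, M.Up (M.V i)

/-- Truth of a formula at a world of an intuitionistic neighbourhood model. -/
def INStruct.sat (M : INStruct W) : Formula → W → Prop
  | .prop i, w  => w ∈ M.V i
  | .bot, _     => False
  | .and φ ψ, w => M.sat φ w ∧ M.sat ψ w
  | .or φ ψ, w  => M.sat φ w ∨ M.sat ψ w
  | .imp φ ψ, w => ∀ v, M.le w v → M.sat φ v → M.sat ψ v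
  | .box φ, w   => ∃ a ∈ M.N, w ∈ a.dom ∧
      ∀ w', M.le w w' → ∀ v ∈ a.val w', M.sat φ v
  | .dia φ, w   => ∀ w', M.le w w' → ∀ a ∈ M.N, w' ∈ a.dom →
      ∃ v ∈ a.val w', M.sat φ v

/-- Semantic consequence over the class of all intuitionistic neighbourhood models. -/
def INConseq (Γ : Set Formula) (φ : Formula) : Prop :=
  ∀ (W : Type) (M : INStruct W), M.IsModel →
    ∀ w : W, (∀ ψ ∈ Γ, M.sat ψ w) → M.sat φ w

/-- A coherent intuitionistic neighbourhood: conditions (N1) and (N2). -/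
def INStruct.CoherentNbhd (M : INStruct W) (a : Nbhd W) : Prop :=
  (∀ ⦃w w' : W⦄, M.le w w' → w ∈ a.dom → ∀ v ∈ a.val w, ∃ v' ∈ a.val w', M.le v v') ∧
  (∀ ⦃w : W⦄, w ∈ a.dom → ∀ v ∈ a.val w, ∀ v', M.le v v' →
      ∃ w', M.le w w' ∧ v' ∈ a.val w')

/-- A model is coherent if all its intuitionistic neighbourhoods are coherent. -/
def INStruct.Coherent (M : INStruct W) : Prop := ∀ a ∈ M.N, M.CoherentNbhd a

/-- Semantic consequence over the class of coherent intuitionistic neighbourhood models. -/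
def CohConseq (Γ : Set Formula) (φ : Formula) : Prop :=
  ∀ (W : Type) (M : INStruct W), M.IsModel → M.Coherent →
    ∀ w : W, (∀ ψ ∈ Γ, M.sat ψ w) → M.sat φ w

/-- The relation R: w R v iff v ∈ a(w) for some neighbourhood a of w. -/
def INStruct.R (M : INStruct W) (w v : W) : Prop :=
  ∃ a ∈ M.N, w ∈ a.dom ∧ v ∈ a.val w

/-- R~-Cartesian: w ≤~ v R~ w implies w = v (with ~ the equivalence closures). -/
def INStruct.RCartesian (M : INStruct W) : Prop :=
  ∀ w v, Relation.EqvGen M.le w v → Relation.EqvGen M.R v w → w = v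

/-- N-Cartesian: w R~ v and w, v ∈ dom(a) imply a(w) = a(v). -/
def INStruct.NCartesian (M : INStruct W) : Prop :=
  ∀ a ∈ M.N, ∀ w v, Relation.EqvGen M.R w v → w ∈ a.dom → v ∈ a.dom →
    a.val w = a.val v

/-- Cartesian: both R~-Cartesian and N-Cartesian. -/
def INStruct.Cartesian (M : INStruct W) : Prop := M.RCartesian ∧ M.NCartesian

/-- Isomorphism of intuitionistic neighbourhood structures. -/
def Isomorphic (M : INStruct W) (M' : INStruct W') : Prop :=
  ∃ (α : W → W') (ν : Nbhd W → Nbhd W'),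
    Function.Bijective α ∧ Set.BijOn ν M.N M'.N ∧
    (∀ w v, M.le w v ↔ M'.le (α w) (α v)) ∧
    (∀ a ∈ M.N, ∀ w, w ∈ a.dom ↔ α w ∈ (ν a).dom) ∧
    (∀ a ∈ M.N, ∀ u ∈ a.dom, ∀ w, w ∈ a.val u ↔ α w ∈ (ν a).val (α u)) ∧
    (∀ i w, w ∈ M.V i ↔ α w ∈ M'.V i)

end IMPaper
namespace IMPaper

/-- in a coherent and Cartesian intuitionistic neighbourhood model,
(1) w R~ v ≤ u implies w ≤ s R~ u for some s, and (2) w R~ v ≤~ u and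
w R~ v' ≤~ u imply v = v'. -/
theorem cartesian_properties {W : Type} (M : INStruct W) (hM : M.IsModel)
    (hcoh : M.Coherent) (hcart : M.Cartesian) :
    (∀ w v u, Relation.EqvGen M.R w v → M.le v u →
        ∃ s, M.le w s ∧ Relation.EqvGen M.R s u) ∧
    (∀ w v v' u, Relation.EqvGen M.R w v → Relation.EqvGen M.le v u →
        Relation.EqvGen M.R w v' → Relation.EqvGen M.le v' u → v = v') := by
  obtain ⟨hpo, hdom, hV⟩ := hM
  have key : ∀ w v, Relation.EqvGen M.R w v →
      (∀ u, M.le v u → ∃ s, M.le w s ∧ Relation.EqvGen M.R s u) ∧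
      (∀ u, M.le w u → ∃ s, M.le v s ∧ Relation.EqvGen M.R s u) := by
    intro w v h
    induction h with
    | rel w v hwv =>
      obtain ⟨a, haN, hwd, hva⟩ := hwv
      constructor
      · intro u hvu
        obtain ⟨w', hww', huw'⟩ := (hcoh a haN).2 hwd v hva u hvu
        exact ⟨w', hww', Relation.EqvGen.rel _ _ ⟨a, haN, hdom a haN hww' hwd, huw'⟩⟩
      · intro u hwu
        obtain ⟨v', hv', hvv'⟩ := (hcoh a haN).1 hwu hwd v hva
        exact ⟨v', hvv', Relation.EqvGen.symm _ _
          (Relation.EqvGen.rel _ _ ⟨a, haN, hdom a haN hwu hwd, hv'⟩)⟩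
    | refl w => exact ⟨fun u h => ⟨u, h, Relation.EqvGen.refl u⟩,
        fun u h => ⟨u, h, Relation.EqvGen.refl u⟩⟩
    | symm w v _ ih => exact ⟨ih.2, ih.1⟩
    | trans w v x _ _ ih1 ih2 =>
      constructor
      · intro u hxu
        obtain ⟨s, hvs, hsu⟩ := ih2.1 u hxu
        obtain ⟨t, hwt, hts⟩ := ih1.1 s hvs
        exact ⟨t, hwt, Relation.EqvGen.trans _ _ _ hts hsu⟩
      · intro u hwu
        obtain ⟨s, hvs, hsu⟩ := ih1.2 u hwu
        obtain ⟨t, hxt, hts⟩ := ih2.2 s hvs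
        exact ⟨t, hxt, Relation.EqvGen.trans _ _ _ hts hsu⟩
  refine ⟨fun w v u h hle => (key w v h).1 u hle, ?_⟩
  intro w v v' u h1 h2 h3 h4
  exact hcart.1 v v' (Relation.EqvGen.trans _ _ _ h2 (Relation.EqvGen.symm _ _ h4))
    (Relation.EqvGen.trans _ _ _ (Relation.EqvGen.symm _ _ h3) h1)

end IMPaper
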